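/- For every natural number k and every natural number m with m ≤ k, the eigenspace of the dimer hopping matrix H_k for the eigenvalue 2m − k, i.e. the kernel of H_k − (2m−k)·I, is one-dimensional. -/
import Mathlib


open Matrix

/-- The dimer hopping matrix `H_k` restricted to the `k`-particle subspace:
a `(k+1) × (k+1)` symmetric tridiagonal matrix with off-diagonal entries
`√((α+1)(k−α))`. -/
noncomputable def hopH (k : ℕ) : Matrix (Fin (k+1)) (Fin (k+1)) ℝ :=
  fun α β =>
    if (α : ℕ) + 1 = (β : ℕ) then Real.sqrt ((((α : ℕ) + 1) * (k - (α : ℕ)) : ℕ))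
    else if (β : ℕ) + 1 = (α : ℕ) then Real.sqrt ((((β : ℕ) + 1) * (k - (β : ℕ)) : ℕ))
    else 0

open Polynomial
noncomputable def wK (k n : ℕ) : ℝ := Real.sqrt ((n.factorial * (k - n).factorial : ℕ))

lemma wK_pos (k n : ℕ) : 0 < wK k n :=
  Real.sqrt_pos.mpr (by exact_mod_cast Nat.mul_pos (Nat.factorial_pos _) (Nat.factorial_pos _))

lemma sqrtA (k n : ℕ) (h : n < k) :
    Real.sqrt (((n+1) * (k - n) : ℕ)) * wK k (n+1) = ((n:ℝ)+1) * wK k n := by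
  obtain ⟨d, hd⟩ : ∃ d, k - n = d + 1 := ⟨k - n - 1, by omega⟩
  have h2 : k - (n+1) = d := by omega
  have key : ((n+1) * (k - n)) * ((n+1).factorial * (k - (n+1)).factorial)
      = (n+1)^2 * (n.factorial * (k - n).factorial) := by
    rw [hd, h2, Nat.factorial_succ, Nat.factorial_succ]; ring
  rw [wK, wK, ← Real.sqrt_mul (by positivity), ← Nat.cast_mul, key, Nat.cast_mul,
    Nat.cast_pow, Real.sqrt_mul (by positivity), Real.sqrt_sq (by positivity)]
  push_cast; ring

lemma sqrtB (k j : ℕ) (h : j < k) :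
    Real.sqrt (((j+1) * (k - j) : ℕ)) * wK k j = ((k:ℝ) - (j:ℝ)) * wK k (j+1) := by
  obtain ⟨d, hd⟩ : ∃ d, k - j = d + 1 := ⟨k - j - 1, by omega⟩
  have h2 : k - (j+1) = d := by omega
  have key : ((j+1) * (k - j)) * (j.factorial * (k - j).factorial)
      = (k-j)^2 * ((j+1).factorial * (k - (j+1)).factorial) := by
    rw [hd, h2, Nat.factorial_succ, Nat.factorial_succ]; ring
  have hcast : ((k:ℝ) - (j:ℝ)) = ((k - j : ℕ) : ℝ) := by
    rw [Nat.cast_sub h.le]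
  rw [wK, wK, ← Real.sqrt_mul (by positivity), ← Nat.cast_mul, key, Nat.cast_mul,
    Nat.cast_pow, Real.sqrt_mul (by positivity), Real.sqrt_sq (by positivity), hcast]

lemma hopH_mulVec (k n : ℕ) (hn : n < k + 1) (v : Fin (k+1) → ℝ) :
    (hopH k).mulVec v ⟨n, hn⟩ =
      (if h : n < k then Real.sqrt (((n+1) * (k - n) : ℕ)) * v ⟨n+1, by omega⟩ else 0)
      + (if h : 0 < n then Real.sqrt ((n * (k - (n-1)) : ℕ)) * v ⟨n-1, by omega⟩ else 0) := by
  rw [Matrix.mulVec, dotProduct]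
  have hsplit : ∀ β : Fin (k+1), hopH k ⟨n, hn⟩ β * v β =
      (if (n+1 : ℕ) = (β:ℕ) then Real.sqrt (((n+1) * (k - n) : ℕ)) * v β else 0)
      + (if ((β:ℕ)+1 = n) then Real.sqrt ((((β:ℕ)+1) * (k - (β:ℕ)) : ℕ)) * v β else 0) := by
    intro β
    simp only [hopH]
    split_ifs with h1 h2 h2 <;> first | (exfalso; omega) | simp | ring
  rw [Finset.sum_congr rfl (fun β _ => hsplit β), Finset.sum_add_distrib]
  congr 1
  · by_cases h : n < k
    · rw [dif_pos h, Finset.sum_eq_single (⟨n+1, by omega⟩ : Fin (k+1))]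
      · simp
      · intro b _ hb
        rw [if_neg]
        intro hc
        exact hb (Fin.ext hc.symm)
      · intro habs; exact absurd (Finset.mem_univ _) habs
    · rw [dif_neg h]
      apply Finset.sum_eq_zero
      intro b _
      rw [if_neg]
      have := b.isLt; omega
  · by_cases h : 0 < n
    · rw [dif_pos h, Finset.sum_eq_single (⟨n-1, by omega⟩ : Fin (k+1))]
      · rw [if_pos (by simp; omega)]
        simp only [Fin.val_mk]
        have h3 : (n-1)+1 = n := by omega
        rw [h3]
      · intro b _ hb
        rw [if_neg]
        intro hc
        exact hb (Fin.ext (show (b:ℕ) = n-1 by omega))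
      · intro habs; exact absurd (Finset.mem_univ _) habs
    · rw [dif_neg h]
      apply Finset.sum_eq_zero
      intro b _
      rw [if_neg]
      omega

noncomputable def pK (k m : ℕ) : ℝ[X] := (X + 1)^m * (X - 1)^(k-m)
noncomputable def cK (k m n : ℕ) : ℝ := (pK k m).coeff n

lemma pK_deriv (k m : ℕ) (hm : m ≤ k) :
    (1 - X^2) * derivative (pK k m) = (C (2*(m:ℝ) - k) - C (k:ℝ) * X) * pK k m := by
  unfold pK
  have e1 : ((m:ℝ[X])) * (X+1)^(m-1) * (X+1) = (m:ℝ[X]) * (X+1)^m := by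
    cases m with
    | zero => simp
    | succ j => simp [pow_succ, mul_assoc]
  have e2 : (((k-m:ℕ):ℝ[X])) * (X-1)^(k-m-1) * (X-1) = ((k-m:ℕ):ℝ[X]) * (X-1)^(k-m) := by
    cases hkm : k - m with
    | zero => simp
    | succ j => simp [pow_succ, mul_assoc]
  have hc : (((k-m:ℕ)):ℝ[X]) = (k:ℝ[X]) - (m:ℝ[X]) := Nat.cast_sub hm
  rw [derivative_mul, derivative_pow, derivative_pow]
  simp only [derivative_add, derivative_X, derivative_one, derivative_sub, mul_one,
    map_sub, _root_.map_mul, map_ofNat, map_natCast, add_zero, sub_zero]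
  rw [hc] at e2
  rw [hc]
  linear_combination (-(X-1) * (X-1)^(k-m)) * e1 + (-(X+1) * (X+1)^m) * e2

lemma pK_id2 (k m : ℕ) (hm : m ≤ k) :
    derivative (pK k m) - (derivative (pK k m)) * X^2
      = C (2*(m:ℝ) - k) * pK k m - C (k:ℝ) * (pK k m * X) := by
  linear_combination pK_deriv k m hm

lemma cK_rec0 (k m : ℕ) (hm : m ≤ k) : cK k m 1 = (2*(m:ℝ) - k) * cK k m 0 := by
  have h := congrArg (fun q => Polynomial.coeff q 0) (pK_id2 k m hm)
  simp only [coeff_sub, coeff_C_mul, mul_coeff_zero, coeff_X_pow, coeff_derivative,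
    coeff_X_zero, mul_zero, sub_zero] at h
  simpa [cK] using h

lemma cK_rec (k m : ℕ) (hm : m ≤ k) (j : ℕ) :
    ((j:ℝ)+2) * cK k m (j+2) = (2*(m:ℝ) - k) * cK k m (j+1) - ((k:ℝ) - j) * cK k m j := by
  have h := congrArg (fun q => Polynomial.coeff q (j+1)) (pK_id2 k m hm)
  simp only [coeff_sub, coeff_C_mul, coeff_mul_X, coeff_mul_X_pow'] at h
  rcases j with _ | i
  · simp only [coeff_derivative, cK] at h ⊢
    norm_num at h ⊢
    linarith
  · have h2 : i + 1 + 1 - 2 = i := by omega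
    rw [if_pos (by omega : 2 ≤ i + 1 + 1), h2] at h
    simp only [coeff_derivative, cK] at h ⊢
    push_cast at h ⊢
    linarith

lemma cK_zero (k m : ℕ) : cK k m 0 = (-1)^(k-m) := by
  rw [cK, Polynomial.coeff_zero_eq_eval_zero]
  simp [pK]

lemma cK_top (k m : ℕ) (hm : m ≤ k) (n : ℕ) (hn : k < n) : cK k m n = 0 := by
  rw [cK]
  apply Polynomial.coeff_eq_zero_of_natDegree_lt
  calc (pK k m).natDegree ≤ ((X+1:ℝ[X])^m).natDegree + ((X-1:ℝ[X])^(k-m)).natDegree :=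
        natDegree_mul_le
    _ ≤ m * (X+1:ℝ[X]).natDegree + (k-m) * (X-1:ℝ[X]).natDegree := by
        gcongr <;> exact natDegree_pow_le
    _ ≤ m * 1 + (k-m) * 1 := by
        gcongr
        · rw [show (X+1:ℝ[X]) = X + C 1 by simp]; exact (natDegree_X_add_C 1).le
        · rw [show (X-1:ℝ[X]) = X - C 1 by simp]; exact (natDegree_X_sub_C 1).le
    _ < n := by omega
open Matrix

lemma ker_unique (k : ℕ) (lam : ℝ) (u : Fin (k+1) → ℝ)
    (hu : ∀ α, (hopH k).mulVec u α = lam * u α)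
    (h0 : u ⟨0, Nat.succ_pos k⟩ = 0) : u = 0 := by
  have H : ∀ n, ∀ hn : n < k+1, u ⟨n, hn⟩ = 0 := by
    intro n
    induction n using Nat.strong_induction_on with
    | _ n ih =>
      intro hn
      rcases n with _ | j
      · exact h0
      · have hj : j < k + 1 := by omega
        have hrow := hu ⟨j, hj⟩
        rw [hopH_mulVec k j hj u, dif_pos (by omega : j < k)] at hrow
        have hz1 : u ⟨j, hj⟩ = 0 := ih j (by omega) hj
        have hz2 : (if h : 0 < j then
            Real.sqrt ((j * (k - (j-1)) : ℕ)) * u ⟨j-1, by omega⟩ else 0) = 0 := by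
          split
          · rw [ih (j-1) (by omega) (by omega), mul_zero]
          · rfl
        rw [hz1, hz2, mul_zero, add_zero] at hrow
        have hpos : 0 < Real.sqrt (((j+1) * (k - j) : ℕ)) :=
          Real.sqrt_pos.mpr (by exact_mod_cast Nat.mul_pos (by omega) (by omega))
        exact (mul_eq_zero.mp hrow).resolve_left (ne_of_gt hpos)
  funext α
  obtain ⟨n, hn⟩ := α
  exact H n hn

noncomputable def vK (k m : ℕ) : Fin (k+1) → ℝ := fun α => cK k m α * wK k α

lemma eigen (k m : ℕ) (hm : m ≤ k) (α : Fin (k+1)) :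
    (hopH k).mulVec (vK k m) α = (2*(m:ℝ) - k) * vK k m α := by
  obtain ⟨n, hn⟩ := α
  rw [hopH_mulVec k n hn (vK k m)]
  simp only [vK, Fin.val_mk]
  by_cases h1 : n < k
  · rw [dif_pos h1]
    by_cases h2 : 0 < n
    · obtain ⟨j, rfl⟩ : ∃ j, n = j + 1 := ⟨n-1, by omega⟩
      rw [dif_pos h2]
      simp only [Nat.add_sub_cancel]
      have ha := sqrtA k (j+1) h1
      have hb := sqrtB k j (by omega)
      have hr := cK_rec k m hm j
      push_cast at ha hb hr ⊢
      linear_combination (cK k m (j+2)) * ha + (cK k m j) * hb + (wK k (j+1)) * hr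
    · have hn0 : n = 0 := by omega
      subst hn0
      rw [dif_neg h2]
      have ha := sqrtA k 0 h1
      have hr := cK_rec0 k m hm
      push_cast at ha ⊢
      linear_combination (cK k m 1) * ha + (wK k 0) * hr
  · have hnk : k = n := by omega
    subst hnk
    rw [dif_neg h1]
    by_cases h2 : 0 < k
    · obtain ⟨j, rfl⟩ : ∃ j, k = j + 1 := ⟨k-1, by omega⟩
      rw [dif_pos h2]
      simp only [Nat.add_sub_cancel]
      have hb := sqrtB (j+1) j (by omega)
      have hr := cK_rec (j+1) m hm j
      have htop : cK (j+1) m (j+1+1) = 0 := cK_top (j+1) m hm (j+1+1) (by omega)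
      rw [htop] at hr
      push_cast at hb hr ⊢
      linear_combination (cK (j+1) m j) * hb + (wK (j+1) (j+1)) * hr
    · have hk0 : k = 0 := by omega
      subst hk0
      have hm0 : m = 0 := by omega
      subst hm0
      rw [dif_neg h2]
      norm_num

/-- The eigenspace of `H_k` for the eigenvalue `2m − k`, i.e. the kernel of
`H_k − (2m−k)·I`, is one-dimensional. -/
theorem eigenspace_hopH_one_dim (k m : ℕ) (hm : m ≤ k) :
    Module.finrank ℝ
      (LinearMap.ker ((hopH k - (2 * (m : ℝ) - (k : ℝ)) • (1 : Matrix (Fin (k+1)) (Fin (k+1)) ℝ)).mulVecLin)) = 1 := by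
  set lam : ℝ := 2 * (m : ℝ) - (k : ℝ) with hlam
  have hmem : ∀ u : Fin (k+1) → ℝ,
      u ∈ LinearMap.ker ((hopH k - lam • (1 : Matrix (Fin (k+1)) (Fin (k+1)) ℝ)).mulVecLin)
        ↔ ∀ α, (hopH k).mulVec u α = lam * u α := by
    intro u
    rw [LinearMap.mem_ker, Matrix.mulVecLin_apply, Matrix.sub_mulVec,
      Matrix.smul_mulVec, Matrix.one_mulVec, sub_eq_zero]
    constructor
    · intro h α; rw [h]; rfl
    · intro h; funext α; rw [h α]; rfl
  have hv00 : vK k m ⟨0, Nat.succ_pos k⟩ ≠ 0 := by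
    show cK k m 0 * wK k 0 ≠ 0
    rw [cK_zero]
    exact mul_ne_zero (by positivity) (ne_of_gt (wK_pos k 0))
  have hvne : vK k m ≠ 0 := by
    intro h
    exact hv00 (by rw [h]; rfl)
  have hker : LinearMap.ker ((hopH k - lam • (1 : Matrix (Fin (k+1)) (Fin (k+1)) ℝ)).mulVecLin)
      = Submodule.span ℝ {vK k m} := by
    apply le_antisymm
    · intro u hu
      rw [hmem] at hu
      set t : ℝ := u ⟨0, Nat.succ_pos k⟩ / vK k m ⟨0, Nat.succ_pos k⟩ with ht
      have h1 : (hopH k).mulVec (u - t • vK k m)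
          = (hopH k).mulVec u - t • (hopH k).mulVec (vK k m) := by
        simp only [← Matrix.mulVecLin_apply, map_sub, _root_.map_smul]
      have hd : ∀ α, (hopH k).mulVec (u - t • vK k m) α = lam * (u - t • vK k m) α := by
        intro α
        rw [h1]
        simp only [Pi.sub_apply, Pi.smul_apply, smul_eq_mul]
        rw [hu α, eigen k m hm α]
        ring
      have hz : (u - t • vK k m) ⟨0, Nat.succ_pos k⟩ = 0 := by
        simp only [Pi.sub_apply, Pi.smul_apply, smul_eq_mul, ht]
        rw [div_mul_cancel₀ _ hv00, sub_self]
      have h0 := ker_unique k lam _ hd hz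
      have : u = t • vK k m := by
        have := sub_eq_zero.mp h0
        exact this
      rw [this]
      exact Submodule.smul_mem _ t (Submodule.mem_span_singleton_self _)
    · rw [Submodule.span_le, Set.singleton_subset_iff, SetLike.mem_coe, hmem]
      exact fun α => eigen k m hm α
  rw [hker, finrank_span_singleton hvne]
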